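/- Suppose the initial point w⁰ = (x⁰, y⁰, λ⁰) satisfies −Σ_{i=1}^N B_iᵀ λ_i⁰ ∈ ∂g(y⁰), and let {(x^k, y^k, λ^k)} be generated by PG-ADMM (i.e. δ_i^k = 0 for all i,k) with constant step sizes c_i^k = c_i ∈ (0, 1/(L_i + γ_i‖A_i‖²)]. Then for every t ≥ 1, every λ = (λ_1,…,λ_N), and every (x*, y*, λ*) ∈ χ*: F(ū^t) − F(x*,y*) + Σ_{i=1}^N ⟨λ_i, A_i x̄_i^t + B_i ȳ^t − b_i⟩ ≤ (1/(2t)) Σ_{i=1}^N [ (1/γ_i)‖λ_i − λ_i⁰‖² + (1/c_i)‖x_i* − x_i⁰‖²_{I − γ_i c_i A_iᵀA_i} ] + (1/(2t)) ‖y* − y⁰‖²_{Σ_{i=1}^N γ_i B_iᵀB_i}, where ‖v‖²_Q = vᵀQv. -/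

import Mathlib

open Finset Matrix MeasureTheory Filter
open scoped RealInnerProductSpace

/-- Matrix–vector multiplication between Euclidean spaces. -/
noncomputable def mvec {m n : Type*} [Fintype m] [Fintype n]
    (A : Matrix m n ℝ) (v : EuclideanSpace ℝ n) : EuclideanSpace ℝ m :=
  WithLp.toLp 2 (A.mulVec v)

/-- The `Q`-quadratic form `‖v‖²_Q = vᵀ Q v`. -/
noncomputable def qnorm {d : Type*} [Fintype d] (Q : Matrix d d ℝ)
    (v : EuclideanSpace ℝ d) : ℝ :=
  ⟪v, mvec Q v⟫

/-- Spectral norm of a matrix. -/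
noncomputable def spec {m n : Type*} [Fintype m] [Fintype n] [DecidableEq n]
    (A : Matrix m n ℝ) : ℝ :=
  ‖LinearMap.toContinuousLinearMap (Matrix.toEuclideanLin A)‖

/-!
One PG-ADMM iteration decreases the Lyapunov function
`V_k = ∑ᵢ ((2γᵢ)⁻¹‖λᵢ - λᵢᵏ‖² + (2cᵢ)⁻¹‖xᵢ* - xᵢᵏ‖²_{I - γᵢcᵢAᵢᵀAᵢ} + (γᵢ/2)‖Bᵢ(y* - yᵏ)‖²)`
by at least the Lagrangian gap `L(xᵏ⁺¹, yᵏ⁺¹, λ) - F(x*, y*)`. The prox-gradient step (together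
with the descent lemma and the gradient inequality for `fᵢ`) and the optimality of the `y`-step
bound the gap by inner products; the dual update and the feasibility of `(x*, y*)` turn these into
the telescoping difference `V_k - V_{k+1}` plus two nonpositive remainders, one a negative square
and the other nonpositive because `cᵢ ≤ 1/(Lᵢ + γᵢ‖Aᵢ‖²)`. Summing over `k < t`, using `V_t ≥ 0`,
and applying Jensen's inequality to the Lagrangian, which is jointly convex in `(x, y)`, gives the
bound, whose right-hand side is `V_0 / t`.
-/

open Topology

section InnerProductSpace

variable {E : Type*} [NormedAddCommGroup E] [InnerProductSpace ℝ E]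

theorem norm_add_smul_sq (u v : E) (t : ℝ) :
    ‖u + t • v‖ ^ 2 = ‖u‖ ^ 2 + 2 * t * ⟪u, v⟫ + t ^ 2 * ‖v‖ ^ 2 := by
  rw [norm_add_sq_real, real_inner_smul_right, norm_smul, mul_pow, Real.norm_eq_abs, sq_abs]
  ring

/-- The variational inequality at a minimiser `x₀` of `φ + q`: here `D` plays the role of the
derivative of `q` at `x₀` in the direction `z - x₀`. -/
theorem ConvexOn.sub_le_of_forall_le_add {s : Set E} {φ q : E → ℝ} (hφ : ConvexOn ℝ s φ)
    {x₀ z : E} (hx₀ : x₀ ∈ s) (hz : z ∈ s) (hmin : ∀ w ∈ s, φ x₀ + q x₀ ≤ φ w + q w)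
    {D C : ℝ} (hq : ∀ t ∈ Set.Ioc (0 : ℝ) 1, q (x₀ + t • (z - x₀)) ≤ q x₀ + t * D + t ^ 2 * C) :
    φ x₀ - φ z ≤ D := by
  have key : ∀ t ∈ Set.Ioc (0 : ℝ) 1, φ x₀ - φ z ≤ D + t * C := by
    rintro t ⟨ht0, ht1⟩
    have hconv : φ (x₀ + t • (z - x₀)) ≤ (1 - t) * φ x₀ + t * φ z := by
      have := hφ.2 hx₀ hz (sub_nonneg.2 ht1) ht0.le (by ring)
      rwa [show (1 - t) • x₀ + t • z = x₀ + t • (z - x₀) by module] at this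
    have hle := hmin _ (hφ.1.add_smul_sub_mem hx₀ hz ⟨ht0.le, ht1⟩)
    refine le_of_mul_le_mul_left ?_ ht0
    nlinarith [hq t ⟨ht0, ht1⟩]
  have hlim : Tendsto (fun t : ℝ => D + t * C) (𝓝[>] 0) (𝓝 D) := by
    have : Continuous (fun t : ℝ => D + t * C) := by fun_prop
    simpa using (this.tendsto 0).mono_left nhdsWithin_le_nhds
  exact ge_of_tendsto hlim (eventually_of_mem (Ioc_mem_nhdsGT zero_lt_one) key)

variable [CompleteSpace E]

theorem ConvexOn.add_inner_le_of_hasGradientAt {f : E → ℝ} {g z : E}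
    (hf : ConvexOn ℝ Set.univ f) (hg : HasGradientAt f g z) (w : E) :
    f z + ⟪g, w - z⟫ ≤ f w := by
  have hline : ConvexOn ℝ Set.univ (f ∘ AffineMap.lineMap (k := ℝ) z w) := by
    simpa using hf.comp_affineMap (AffineMap.lineMap (k := ℝ) z w)
  have hderiv : HasDerivAt (f ∘ AffineMap.lineMap (k := ℝ) z w) ⟪g, w - z⟫ 0 :=
    hg.hasFDerivAt.comp_hasDerivAt_of_eq 0 AffineMap.hasDerivAt_lineMap (by simp)
  have := hline.le_slope_of_hasDerivAt (Set.mem_univ 0) (Set.mem_univ 1) zero_lt_one hderiv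
  simp only [slope_def_field, Function.comp_apply, AffineMap.lineMap_apply_one,
    AffineMap.lineMap_apply_zero, sub_zero, div_one] at this
  linarith

theorem le_add_inner_add_sq_of_lipschitz_gradient {f : E → ℝ} {f' : E → E} {L : ℝ}
    (hgrad : ∀ z, HasGradientAt f (f' z) z) (hlip : ∀ z w, ‖f' z - f' w‖ ≤ L * ‖z - w‖)
    (z w : E) : f w ≤ f z + ⟪f' z, w - z⟫ + L / 2 * ‖w - z‖ ^ 2 := by
  set ℓ := AffineMap.lineMap (k := ℝ) z w
  have hderiv : ∀ s : ℝ, HasDerivAt (f ∘ ℓ) ⟪f' (ℓ s), w - z⟫ s := fun s =>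
    (hgrad (ℓ s)).hasFDerivAt.comp_hasDerivAt s AffineMap.hasDerivAt_lineMap
  have hbound : ∀ s ∈ Set.Ico (0 : ℝ) 1,
      ⟪f' (ℓ s), w - z⟫ ≤ ⟪f' z, w - z⟫ + L * s * ‖w - z‖ ^ 2 := by
    rintro s ⟨hs0, -⟩
    have hℓ : ‖ℓ s - z‖ = s * ‖w - z‖ := by
      rw [← vsub_eq_sub, AffineMap.lineMap_vsub_left, norm_smul, Real.norm_of_nonneg hs0,
        vsub_eq_sub]
    calc ⟪f' (ℓ s), w - z⟫ = ⟪f' z, w - z⟫ + ⟪f' (ℓ s) - f' z, w - z⟫ := by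
          rw [inner_sub_left]; ring
      _ ≤ ⟪f' z, w - z⟫ + ‖f' (ℓ s) - f' z‖ * ‖w - z‖ := by
          gcongr; exact real_inner_le_norm _ _
      _ ≤ ⟪f' z, w - z⟫ + L * ‖ℓ s - z‖ * ‖w - z‖ := by
          gcongr; exact hlip _ _
      _ = ⟪f' z, w - z⟫ + L * s * ‖w - z‖ ^ 2 := by rw [hℓ]; ring
  have hB : ∀ s : ℝ, HasDerivAt (fun s => f z + s * ⟪f' z, w - z⟫ + L / 2 * s ^ 2 * ‖w - z‖ ^ 2)
      (⟪f' z, w - z⟫ + L * s * ‖w - z‖ ^ 2) s := by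
    intro s
    refine ((((hasDerivAt_id s).mul_const _).const_add (f z)).add
      (((hasDerivAt_pow 2 s).const_mul (L / 2)).mul_const _)).congr_deriv ?_
    simp only [Nat.cast_ofNat]
    ring
  have := image_le_of_deriv_right_le_deriv_boundary
    (fun s _ => (hderiv s).continuousAt.continuousWithinAt)
    (fun s _ => (hderiv s).hasDerivWithinAt) (by simp [ℓ])
    (fun s _ => (hB s).continuousAt.continuousWithinAt) (fun s _ => (hB s).hasDerivWithinAt)
    hbound (Set.right_mem_Icc.2 zero_le_one)
  simpa [ℓ] using this

theorem prox_grad_step_le {s : Set E} {φ f : E → ℝ} {f' : E → E} {L c : ℝ} (hc : 0 < c)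
    (hφ : ConvexOn ℝ s φ) (hf : ConvexOn ℝ Set.univ f) (hgrad : ∀ z, HasGradientAt f (f' z) z)
    (hlip : ∀ z w, ‖f' z - f' w‖ ≤ L * ‖z - w‖) {d x x' z : E} (hx' : x' ∈ s)
    (hmin : ∀ w ∈ s, φ x' + (2 * c)⁻¹ * ‖x' - (x - c • (f' x + d))‖ ^ 2
      ≤ φ w + (2 * c)⁻¹ * ‖w - (x - c • (f' x + d))‖ ^ 2) (hz : z ∈ s) :
    φ x' + f x' - (φ z + f z) ≤ ⟪d, z - x'⟫ + c⁻¹ * ⟪z - x', x' - x⟫ + L / 2 * ‖x' - x‖ ^ 2 := by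
  set p := x - c • (f' x + d)
  have hopt : φ x' - φ z ≤ c⁻¹ * ⟪x' - p, z - x'⟫ :=
    hφ.sub_le_of_forall_le_add (q := fun w => (2 * c)⁻¹ * ‖w - p‖ ^ 2) hx' hz hmin
      (C := (2 * c)⁻¹ * ‖z - x'‖ ^ 2) fun t _ => le_of_eq (by
        rw [show x' + t • (z - x') - p = (x' - p) + t • (z - x') by abel, norm_add_smul_sq]
        ring)
  have hopt_eq : c⁻¹ * ⟪x' - p, z - x'⟫
      = c⁻¹ * ⟪z - x', x' - x⟫ + ⟪f' x, z - x'⟫ + ⟪d, z - x'⟫ := by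
    rw [show x' - p = (x' - x) + c • (f' x + d) by simp only [p]; abel, inner_add_left,
      real_inner_smul_left, inner_add_left, real_inner_comm (z - x')]
    field_simp
    ring
  have hdesc := le_add_inner_add_sq_of_lipschitz_gradient hgrad hlip x x'
  have hcvx := hf.add_inner_le_of_hasGradientAt (hgrad x) z
  have hsplit : ⟪f' x, z - x⟫ = ⟪f' x, z - x'⟫ + ⟪f' x, x' - x⟫ := by
    rw [← inner_add_right, sub_add_sub_cancel]
  linarith

end InnerProductSpace

/-- For one ADMM step with `p = A(x* - x⁺)`, `q = B(y* - y⁺)`, `a = A(x - x⁺)`, `v = B(y - y⁺)` and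
new residual `r`, the multiplier terms become differences of squares and one negative square. -/
theorem inner_dual_update_eq {F : Type*} [NormedAddCommGroup F] [InnerProductSpace ℝ F]
    {γ : ℝ} (hγ : γ ≠ 0) {lam lam' l p q a v r : F} (hr : p + q = -r) (hlam : lam' = lam + γ • r) :
    ⟪lam' + γ • (a + v), p⟫ + ⟪lam', q⟫ + ⟪l, r⟫
      = (2 * γ)⁻¹ * (‖l - lam‖ ^ 2 - ‖l - lam'‖ ^ 2) + γ / 2 * (‖a‖ ^ 2 + ‖p‖ ^ 2 - ‖p - a‖ ^ 2)
        + γ / 2 * (‖q - v‖ ^ 2 - ‖q‖ ^ 2) - (2 * γ)⁻¹ * ‖(lam' - lam) + γ • v‖ ^ 2 := by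
  obtain rfl : r = -(p + q) := by rw [hr, neg_neg]
  subst hlam
  simp only [← real_inner_self_eq_norm_sq, inner_add_left, inner_add_right, inner_sub_left,
    inner_sub_right, inner_neg_left, inner_neg_right, real_inner_smul_left, real_inner_smul_right,
    add_sub_cancel_left]
  simp only [real_inner_comm]
  field_simp
  ring

section MatrixVector

variable {ι κ σ : Type*} [Fintype ι] [Fintype κ] [Fintype σ]

@[simp]
theorem mvec_add (A : Matrix ι κ ℝ) (u v : EuclideanSpace ℝ κ) :
    mvec A (u + v) = mvec A u + mvec A v :=
  congrArg (WithLp.toLp 2) (Matrix.mulVec_add A u v)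

@[simp]
theorem mvec_sub (A : Matrix ι κ ℝ) (u v : EuclideanSpace ℝ κ) :
    mvec A (u - v) = mvec A u - mvec A v :=
  congrArg (WithLp.toLp 2) (Matrix.mulVec_sub A u v)

@[simp]
theorem mvec_smul (A : Matrix ι κ ℝ) (r : ℝ) (v : EuclideanSpace ℝ κ) :
    mvec A (r • v) = r • mvec A v :=
  congrArg (WithLp.toLp 2) (Matrix.mulVec_smul A r v)

theorem mvec_mul (A : Matrix ι κ ℝ) (B : Matrix κ σ ℝ) (v : EuclideanSpace ℝ σ) :
    mvec (A * B) v = mvec A (mvec B v) :=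
  congrArg (WithLp.toLp 2) (Matrix.mulVec_mulVec v A B).symm

theorem inner_mvec_transpose (A : Matrix ι κ ℝ) (w : EuclideanSpace ℝ ι)
    (v : EuclideanSpace ℝ κ) : ⟪mvec Aᵀ w, v⟫ = ⟪w, mvec A v⟫ := by
  simp only [PiLp.inner_apply, RCLike.inner_apply, conj_trivial]
  change v.ofLp ⬝ᵥ Aᵀ *ᵥ w.ofLp = A *ᵥ v.ofLp ⬝ᵥ w.ofLp
  rw [Matrix.dotProduct_mulVec, Matrix.vecMul_transpose, dotProduct_comm]

theorem norm_mvec_le [DecidableEq κ] (A : Matrix ι κ ℝ) (v : EuclideanSpace ℝ κ) :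
    ‖mvec A v‖ ≤ spec A * ‖v‖ :=
  (LinearMap.toContinuousLinearMap (Matrix.toEuclideanLin A)).le_opNorm v

theorem qnorm_smul_transpose_mul (A : Matrix ι κ ℝ) (s : ℝ) (v : EuclideanSpace ℝ κ) :
    qnorm (s • (Aᵀ * A)) v = s * ‖mvec A v‖ ^ 2 := by
  rw [qnorm, show mvec (s • (Aᵀ * A)) v = s • mvec (Aᵀ * A) v from
    congrArg (WithLp.toLp 2) (Matrix.smul_mulVec s (Aᵀ * A) v), mvec_mul, real_inner_smul_right,
    real_inner_comm, inner_mvec_transpose, real_inner_self_eq_norm_sq]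

theorem qnorm_one_sub [DecidableEq κ] (Q : Matrix κ κ ℝ) (v : EuclideanSpace ℝ κ) :
    qnorm (1 - Q) v = ‖v‖ ^ 2 - qnorm Q v := by
  rw [qnorm, qnorm, show mvec (1 - Q) v = v - mvec Q v from
    congrArg (WithLp.toLp 2) (by rw [Matrix.sub_mulVec, Matrix.one_mulVec]; rfl),
    inner_sub_right, real_inner_self_eq_norm_sq]

theorem qnorm_sum {α : Type*} (S : Finset α) (Q : α → Matrix κ κ ℝ) (v : EuclideanSpace ℝ κ) :
    qnorm (∑ a ∈ S, Q a) v = ∑ a ∈ S, qnorm (Q a) v := by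
  classical
  induction S using Finset.induction with
  | empty => simp [qnorm, mvec]
  | insert a S ha ih =>
    rw [Finset.sum_insert ha, Finset.sum_insert ha, ← ih, qnorm, qnorm, qnorm,
      show mvec (Q a + ∑ b ∈ S, Q b) v = mvec (Q a) v + mvec (∑ b ∈ S, Q b) v from
        congrArg (WithLp.toLp 2) (Matrix.add_mulVec _ _ _), inner_add_right]

end MatrixVector

section Convexity

variable {E : Type*} [AddCommGroup E] [Module ℝ E]

theorem convexOn_sum {α : Type*} {s : Set E} (hs : Convex ℝ s) (S : Finset α) {h : α → E → ℝ}
    (hh : ∀ i ∈ S, ConvexOn ℝ s (h i)) : ConvexOn ℝ s (fun x => ∑ i ∈ S, h i x) := by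
  classical
  induction S using Finset.induction with
  | empty => simpa using convexOn_const (0 : ℝ) hs
  | insert i S hi ih =>
    simp_rw [sum_insert hi]
    exact (hh i (mem_insert_self i S)).add (ih fun j hj => hh j (mem_insert_of_mem hj))

theorem ConvexOn.map_finset_average_le {α : Type*} {s : Set E} {h : E → ℝ} (hh : ConvexOn ℝ s h)
    {S : Finset α} (hS : S.Nonempty) {u : α → E} (hu : ∀ k ∈ S, u k ∈ s) :
    h ((#S : ℝ)⁻¹ • ∑ k ∈ S, u k) ≤ (#S : ℝ)⁻¹ * ∑ k ∈ S, h (u k) := by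
  rw [smul_sum, mul_sum]
  refine hh.map_sum_le (fun _ _ => by positivity) ?_ hu
  rw [sum_const, nsmul_eq_mul, mul_inv_cancel₀ (by exact_mod_cast hS.card_pos.ne')]

theorem sum_Icc_le_sub_of_le_sub {a V : ℕ → ℝ} (h : ∀ k, a (k + 1) ≤ V k - V (k + 1)) (t : ℕ) :
    ∑ k ∈ Icc 1 t, a k ≤ V 0 - V t := by
  induction t with
  | zero => simp
  | succ t ih =>
    rw [sum_Icc_succ_top (by omega)]
    linarith [h t]

theorem ConvexOn.map_average_le_of_le_sub {s : Set E} {h : E → ℝ} (hh : ConvexOn ℝ s h)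
    {u : ℕ → E} (hu : ∀ k, u (k + 1) ∈ s) {V : ℕ → ℝ} (hV : ∀ k, h (u (k + 1)) ≤ V k - V (k + 1))
    {t : ℕ} (ht : 1 ≤ t) (hVt : 0 ≤ V t) :
    h ((t : ℝ)⁻¹ • ∑ k ∈ Icc 1 t, u k) ≤ (t : ℝ)⁻¹ * V 0 := by
  have hmem : ∀ k ∈ Icc 1 t, u k ∈ s := fun k hk => by
    obtain ⟨j, rfl⟩ := Nat.exists_eq_add_one_of_ne_zero (Nat.one_le_iff_ne_zero.1 (mem_Icc.1 hk).1)
    exact hu j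
  have hjensen := hh.map_finset_average_le (nonempty_Icc.2 ht) hmem
  rw [Nat.card_Icc, Nat.add_sub_cancel] at hjensen
  exact hjensen.trans (mul_le_mul_of_nonneg_left
    ((sum_Icc_le_sub_of_le_sub hV t).trans (by linarith)) (by positivity))

end Convexity

theorem eq_zero_of_forall_sum_inner_le {α : Type*} [Fintype α] {F : α → Type*}
    [∀ i, NormedAddCommGroup (F i)] [∀ i, InnerProductSpace ℝ (F i)] {r ls : ∀ i, F i}
    (h : ∀ l : ∀ i, F i, ∑ i, ⟪l i, r i⟫ ≤ ∑ i, ⟪ls i, r i⟫) (i : α) : r i = 0 := by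
  have hlr := h (ls + r)
  simp only [Pi.add_apply, inner_add_left, sum_add_distrib, real_inner_self_eq_norm_sq] at hlr
  have hsum : ∑ j, ‖r j‖ ^ 2 = 0 :=
    le_antisymm (by linarith) (sum_nonneg fun _ _ => by positivity)
  simpa using (sum_eq_zero_iff_of_nonneg fun j _ => by positivity).1 hsum i (mem_univ i)

theorem nonneg_mul_norm_of_lipschitz {F G : Type*} [NormedAddCommGroup F] [NormedAddCommGroup G]
    {φ : F → G} {L : ℝ} (hlip : ∀ z w, ‖φ z - φ w‖ ≤ L * ‖z - w‖) (v : F) : 0 ≤ L * ‖v‖ := by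
  simpa using (norm_nonneg _).trans (hlip v 0)

theorem ConvexOn.sub_le_of_penalty_min {α σ : Type*} [Fintype α] [Fintype σ] {m : α → Type*}
    [∀ i, Fintype (m i)] (B : ∀ i, Matrix (m i) σ ℝ) (a b lam : ∀ i, EuclideanSpace ℝ (m i))
    {γ : α → ℝ} (hγ : ∀ i, γ i ≠ 0) {s : Set (EuclideanSpace ℝ σ)} {g : EuclideanSpace ℝ σ → ℝ}
    (hg : ConvexOn ℝ s g) {y₀ z : EuclideanSpace ℝ σ} (hy₀ : y₀ ∈ s) (hz : z ∈ s)
    (hmin : ∀ w ∈ s, g y₀ + ∑ i, γ i / 2 * ‖a i + mvec (B i) y₀ - b i + (γ i)⁻¹ • lam i‖ ^ 2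
      ≤ g w + ∑ i, γ i / 2 * ‖a i + mvec (B i) w - b i + (γ i)⁻¹ • lam i‖ ^ 2) :
    g y₀ - g z ≤ ∑ i, ⟪lam i + γ i • (a i + mvec (B i) y₀ - b i), mvec (B i) (z - y₀)⟫ := by
  refine hg.sub_le_of_forall_le_add
    (q := fun w => ∑ i, γ i / 2 * ‖a i + mvec (B i) w - b i + (γ i)⁻¹ • lam i‖ ^ 2) hy₀ hz hmin
    (C := ∑ i, γ i / 2 * ‖mvec (B i) (z - y₀)‖ ^ 2) fun t _ => le_of_eq ?_
  rw [mul_sum, mul_sum, ← sum_add_distrib, ← sum_add_distrib]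
  refine sum_congr rfl fun i _ => ?_
  rw [show lam i + γ i • (a i + mvec (B i) y₀ - b i)
      = γ i • (a i + mvec (B i) y₀ - b i + (γ i)⁻¹ • lam i) by
    rw [smul_add, smul_smul, mul_inv_cancel₀ (hγ i), one_smul, add_comm],
    show a i + mvec (B i) (y₀ + t • (z - y₀)) - b i + (γ i)⁻¹ • lam i
      = (a i + mvec (B i) y₀ - b i + (γ i)⁻¹ • lam i) + t • mvec (B i) (z - y₀) by
    rw [mvec_add, mvec_smul]; abel,
    norm_add_smul_sq, real_inner_smul_left]
  ring

section Block

variable {ι κ σ : Type*} [Fintype ι] [Fintype κ] [Fintype σ]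

/-- One block's share of the Lyapunov function of PG-ADMM; `admmEnergy_eq` rewrites it in the
weighted norms of the bound. -/
noncomputable def admmEnergy (A : Matrix ι κ ℝ) (B : Matrix ι σ ℝ) (γ c : ℝ)
    (xs : EuclideanSpace ℝ κ) (ys : EuclideanSpace ℝ σ) (l : EuclideanSpace ℝ ι)
    (x : EuclideanSpace ℝ κ) (y : EuclideanSpace ℝ σ) (lam : EuclideanSpace ℝ ι) : ℝ :=
  (2 * γ)⁻¹ * ‖l - lam‖ ^ 2 + (2 * c)⁻¹ * ‖xs - x‖ ^ 2 - γ / 2 * ‖mvec A (xs - x)‖ ^ 2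
    + γ / 2 * ‖mvec B (ys - y)‖ ^ 2

theorem admmEnergy_nonneg (A : Matrix ι κ ℝ) (B : Matrix ι σ ℝ) {γ c : ℝ} (hγ : 0 < γ)
    (hc : 0 < c) {xs x : EuclideanSpace ℝ κ} (hA : γ * c * ‖mvec A (xs - x)‖ ^ 2 ≤ ‖xs - x‖ ^ 2)
    (ys y : EuclideanSpace ℝ σ) (l lam : EuclideanSpace ℝ ι) :
    0 ≤ admmEnergy A B γ c xs ys l x y lam := by
  have hx : (2 * c)⁻¹ * ‖xs - x‖ ^ 2 - γ / 2 * ‖mvec A (xs - x)‖ ^ 2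
      = (2 * c)⁻¹ * (‖xs - x‖ ^ 2 - γ * c * ‖mvec A (xs - x)‖ ^ 2) := by
    field_simp
  have hx_nonneg := mul_nonneg (inv_nonneg.2 (mul_pos two_pos hc).le) (sub_nonneg.2 hA)
  rw [admmEnergy, add_sub_assoc, hx]
  positivity

variable [DecidableEq κ] (A : Matrix ι κ ℝ) (B : Matrix ι σ ℝ)

theorem admmEnergy_eq {γ c : ℝ} (hc : c ≠ 0) (xs : EuclideanSpace ℝ κ) (ys : EuclideanSpace ℝ σ)
    (l : EuclideanSpace ℝ ι) (x : EuclideanSpace ℝ κ) (y : EuclideanSpace ℝ σ)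
    (lam : EuclideanSpace ℝ ι) :
    admmEnergy A B γ c xs ys l x y lam = 2⁻¹ * (γ⁻¹ * ‖l - lam‖ ^ 2
      + c⁻¹ * qnorm (1 - (γ * c) • (Aᵀ * A)) (xs - x) + qnorm (γ • (Bᵀ * B)) (ys - y)) := by
  rw [qnorm_one_sub, qnorm_smul_transpose_mul, qnorm_smul_transpose_mul, admmEnergy]
  field_simp
  ring

theorem mul_sq_norm_mvec_le {γ c L : ℝ} (hγ : 0 ≤ γ) (hc : 0 ≤ c)
    (hstep : c * (L + γ * spec A ^ 2) ≤ 1) {v : EuclideanSpace ℝ κ} (hLv : 0 ≤ L * ‖v‖) :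
    γ * c * ‖mvec A v‖ ^ 2 ≤ ‖v‖ ^ 2 := by
  have hAv : ‖mvec A v‖ ^ 2 ≤ spec A ^ 2 * ‖v‖ ^ 2 := by
    rw [← mul_pow]; exact pow_le_pow_left₀ (norm_nonneg _) (norm_mvec_le A v) 2
  calc γ * c * ‖mvec A v‖ ^ 2 ≤ γ * c * (spec A ^ 2 * ‖v‖ ^ 2) := by gcongr
    _ = c * (L + γ * spec A ^ 2) * ‖v‖ ^ 2 - c * (L * ‖v‖) * ‖v‖ := by ring
    _ ≤ 1 * ‖v‖ ^ 2 - 0 := by gcongr; positivity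
    _ = ‖v‖ ^ 2 := by ring

theorem admm_block_le_energy_sub (bb : EuclideanSpace ℝ ι) {γ c L : ℝ} (hγ : 0 < γ) (hc : 0 < c)
    (hstep : c * (L + γ * spec A ^ 2) ≤ 1) {xs x x' : EuclideanSpace ℝ κ}
    {ys y y' : EuclideanSpace ℝ σ} {l lam lam' : EuclideanSpace ℝ ι}
    (hfeas : mvec A xs + mvec B ys - bb = 0)
    (hlam : lam' = lam + γ • (mvec A x' + mvec B y' - bb)) :
    ⟪lam + γ • (mvec A x + mvec B y - bb), mvec A (xs - x')⟫ + ⟪lam', mvec B (ys - y')⟫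
        + ⟪l, mvec A x' + mvec B y' - bb⟫ + c⁻¹ * ⟪xs - x', x' - x⟫ + L / 2 * ‖x' - x‖ ^ 2
      ≤ admmEnergy A B γ c xs ys l x y lam - admmEnergy A B γ c xs ys l x' y' lam' := by
  have hhat : lam + γ • (mvec A x + mvec B y - bb)
      = lam' + γ • (mvec A (x - x') + mvec B (y - y')) := by
    rw [hlam, mvec_sub, mvec_sub]; module
  have hres : mvec A (xs - x') + mvec B (ys - y') = -(mvec A x' + mvec B y' - bb) := by
    rw [mvec_sub, mvec_sub, ← sub_eq_zero, ← hfeas]; abel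
  rw [hhat, inner_dual_update_eq hγ.ne' hres hlam,
    show mvec A (xs - x') - mvec A (x - x') = mvec A (xs - x) by simp only [mvec_sub]; abel,
    show mvec B (ys - y') - mvec B (y - y') = mvec B (ys - y) by simp only [mvec_sub]; abel]
  have hA : ‖mvec A (x - x')‖ ^ 2 ≤ spec A ^ 2 * ‖x' - x‖ ^ 2 := by
    rw [← mul_pow, norm_sub_rev x']; exact pow_le_pow_left₀ (norm_nonneg _) (norm_mvec_le A _) 2
  have hcinv : L + γ * spec A ^ 2 ≤ c⁻¹ := by rw [← one_div, le_div_iff₀' hc]; exact hstep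
  have hprimal : γ / 2 * ‖mvec A (x - x')‖ ^ 2 + L / 2 * ‖x' - x‖ ^ 2
      ≤ (2 * c)⁻¹ * ‖x' - x‖ ^ 2 := by
    calc γ / 2 * ‖mvec A (x - x')‖ ^ 2 + L / 2 * ‖x' - x‖ ^ 2
        ≤ γ / 2 * (spec A ^ 2 * ‖x' - x‖ ^ 2) + L / 2 * ‖x' - x‖ ^ 2 := by gcongr
      _ = (L + γ * spec A ^ 2) / 2 * ‖x' - x‖ ^ 2 := by ring
      _ ≤ c⁻¹ / 2 * ‖x' - x‖ ^ 2 := by gcongr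
      _ = (2 * c)⁻¹ * ‖x' - x‖ ^ 2 := by ring
  have hdual : 0 ≤ (2 * γ)⁻¹ * ‖lam' - lam + γ • mvec B (y - y')‖ ^ 2 := by positivity
  have hcross : c⁻¹ * ⟪xs - x', x' - x⟫
      = (2 * c)⁻¹ * (‖xs - x‖ ^ 2 - ‖xs - x'‖ ^ 2 - ‖x' - x‖ ^ 2) := by
    rw [← sub_add_sub_cancel xs x' x, norm_add_sq_real]
    field_simp
    ring
  rw [admmEnergy, admmEnergy, hcross]
  linear_combination hprimal + hdual

end Block

section PGADMM

variable {N : ℕ} {n m : Fin N → ℕ} {ny : ℕ} (A : ∀ i, Matrix (Fin (m i)) (Fin (n i)) ℝ)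
  (B : ∀ i, Matrix (Fin (m i)) (Fin ny) ℝ) (b : ∀ i, EuclideanSpace ℝ (Fin (m i)))
  (ξ f : ∀ i, EuclideanSpace ℝ (Fin (n i)) → ℝ) (g : EuclideanSpace ℝ (Fin ny) → ℝ)

noncomputable def lagrangian (l : ∀ i, EuclideanSpace ℝ (Fin (m i)))
    (p : (∀ i, EuclideanSpace ℝ (Fin (n i))) × EuclideanSpace ℝ (Fin ny)) : ℝ :=
  g p.2 + ∑ i, (ξ i (p.1 i) + f i (p.1 i)) + ∑ i, ⟪l i, mvec (A i) (p.1 i) + mvec (B i) p.2 - b i⟫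

theorem convexOn_lagrangian {domξ : ∀ i, Set (EuclideanSpace ℝ (Fin (n i)))}
    {domg : Set (EuclideanSpace ℝ (Fin ny))} (hξ : ∀ i, ConvexOn ℝ (domξ i) (ξ i))
    (hf : ∀ i, ConvexOn ℝ Set.univ (f i)) (hg : ConvexOn ℝ domg g)
    (l : ∀ i, EuclideanSpace ℝ (Fin (m i))) :
    ConvexOn ℝ (Set.univ.pi domξ ×ˢ domg) (lagrangian A B b ξ f g l) := by
  have hS : Convex ℝ (Set.univ.pi domξ ×ˢ domg) := (convex_pi fun i _ => (hξ i).1).prod hg.1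
  let π : ∀ i, ((∀ i, EuclideanSpace ℝ (Fin (n i))) × EuclideanSpace ℝ (Fin ny)) →ₗ[ℝ]
      EuclideanSpace ℝ (Fin (n i)) := fun i => (LinearMap.proj i).comp (LinearMap.fst ℝ _ _)
  have hcoord : ∀ i, ConvexOn ℝ (Set.univ.pi domξ ×ˢ domg)
      (fun p : (∀ i, EuclideanSpace ℝ (Fin (n i))) × EuclideanSpace ℝ (Fin ny) =>
        ξ i (p.1 i) + f i (p.1 i)) := fun i =>
    (((hξ i).comp_linearMap (π i)).subset
      (fun p hp => hp.1 i (Set.mem_univ i)) hS).add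
    (((hf i).comp_linearMap (π i)).subset
      (fun _ _ => Set.mem_univ _) hS)
  have haffine : ∀ i, ConvexOn ℝ (Set.univ.pi domξ ×ˢ domg)
      (fun p : (∀ i, EuclideanSpace ℝ (Fin (n i))) × EuclideanSpace ℝ (Fin ny) =>
        ⟪l i, mvec (A i) (p.1 i) + mvec (B i) p.2 - b i⟫) := by
    refine fun i => ⟨hS, fun p _ q _ u v _ _ huv => le_of_eq ?_⟩
    obtain rfl : v = 1 - u := by linarith
    simp only [Prod.fst_add, Prod.snd_add, Prod.smul_fst, Prod.smul_snd, Pi.add_apply,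
      Pi.smul_apply, mvec_add, mvec_smul, smul_eq_mul, ← real_inner_smul_right, ← inner_add_right]
    congr 1
    module
  exact (((hg.comp_linearMap (LinearMap.snd ℝ _ _)).subset (fun p hp => hp.2) hS).add
    (convexOn_sum hS univ fun i _ => hcoord i)).add (convexOn_sum hS univ fun i _ => haffine i)

theorem lagrangian_sub_le_admmEnergy_sub {domξ : ∀ i, Set (EuclideanSpace ℝ (Fin (n i)))}
    {domg : Set (EuclideanSpace ℝ (Fin ny))}
    {f' : ∀ i, EuclideanSpace ℝ (Fin (n i)) → EuclideanSpace ℝ (Fin (n i))} {L γ c : Fin N → ℝ}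
    (hξ : ∀ i, ConvexOn ℝ (domξ i) (ξ i)) (hf : ∀ i, ConvexOn ℝ Set.univ (f i))
    (hgrad : ∀ i z, HasGradientAt (f i) (f' i z) z)
    (hlip : ∀ i z w, ‖f' i z - f' i w‖ ≤ L i * ‖z - w‖) (hg : ConvexOn ℝ domg g)
    (hγ : ∀ i, 0 < γ i) (hc : ∀ i, 0 < c i) (hstep : ∀ i, c i * (L i + γ i * spec (A i) ^ 2) ≤ 1)
    {xs : ∀ i, EuclideanSpace ℝ (Fin (n i))} {ys : EuclideanSpace ℝ (Fin ny)}
    (hxs : ∀ i, xs i ∈ domξ i) (hys : ys ∈ domg)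
    (hfeas : ∀ i, mvec (A i) (xs i) + mvec (B i) ys - b i = 0)
    {x x' : ∀ i, EuclideanSpace ℝ (Fin (n i))} {y y' : EuclideanSpace ℝ (Fin ny)}
    {lam lam' : ∀ i, EuclideanSpace ℝ (Fin (m i))}
    (hx' : ∀ i, x' i ∈ domξ i ∧ ∀ z ∈ domξ i,
      ξ i (x' i) + (2 * c i)⁻¹ *
        ‖x' i - (x i - c i • (f' i (x i) +
          mvec (A i)ᵀ (lam i + γ i • (mvec (A i) (x i) + mvec (B i) y - b i))))‖ ^ 2
      ≤ ξ i z + (2 * c i)⁻¹ *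
        ‖z - (x i - c i • (f' i (x i) +
          mvec (A i)ᵀ (lam i + γ i • (mvec (A i) (x i) + mvec (B i) y - b i))))‖ ^ 2)
    (hy' : y' ∈ domg ∧ ∀ z ∈ domg,
      g y' + ∑ i, γ i / 2 * ‖mvec (A i) (x' i) + mvec (B i) y' - b i + (γ i)⁻¹ • lam i‖ ^ 2
      ≤ g z + ∑ i, γ i / 2 * ‖mvec (A i) (x' i) + mvec (B i) z - b i + (γ i)⁻¹ • lam i‖ ^ 2)
    (hlam' : ∀ i, lam' i = lam i + γ i • (mvec (A i) (x' i) + mvec (B i) y' - b i))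
    (l : ∀ i, EuclideanSpace ℝ (Fin (m i))) :
    lagrangian A B b ξ f g l (x', y') - (g ys + ∑ i, (ξ i (xs i) + f i (xs i)))
      ≤ ∑ i, admmEnergy (A i) (B i) (γ i) (c i) (xs i) ys (l i) (x i) y (lam i)
        - ∑ i, admmEnergy (A i) (B i) (γ i) (c i) (xs i) ys (l i) (x' i) y' (lam' i) := by
  have hblock : ∀ i, ξ i (x' i) + f i (x' i) - (ξ i (xs i) + f i (xs i))
      + ⟪lam' i, mvec (B i) (ys - y')⟫ + ⟪l i, mvec (A i) (x' i) + mvec (B i) y' - b i⟫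
      ≤ admmEnergy (A i) (B i) (γ i) (c i) (xs i) ys (l i) (x i) y (lam i)
        - admmEnergy (A i) (B i) (γ i) (c i) (xs i) ys (l i) (x' i) y' (lam' i) := by
    intro i
    have hprox := prox_grad_step_le (hc i) (hξ i) (hf i) (hgrad i) (hlip i) (hx' i).1 (hx' i).2
      (hxs i)
    rw [inner_mvec_transpose] at hprox
    linarith [admm_block_le_energy_sub (A i) (B i) (b i) (hγ i) (hc i) (hstep i) (hfeas i)
      (hlam' i) (l := l i) (x := x i) (y := y)]
  have hdual := hg.sub_le_of_penalty_min B (fun i => mvec (A i) (x' i)) b lam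
    (fun i => (hγ i).ne') hy'.1 hys hy'.2
  simp only [← hlam'] at hdual
  have hsum := sum_le_sum fun i (_ : i ∈ univ) => hblock i
  simp only [sum_add_distrib, sum_sub_distrib] at hsum
  simp only [lagrangian, sum_add_distrib]
  linarith

theorem sum_admmEnergy_eq {γ c : Fin N → ℝ} (hc : ∀ i, c i ≠ 0)
    (xs x : ∀ i, EuclideanSpace ℝ (Fin (n i))) (ys y : EuclideanSpace ℝ (Fin ny))
    (l lam : ∀ i, EuclideanSpace ℝ (Fin (m i))) :
    ∑ i, admmEnergy (A i) (B i) (γ i) (c i) (xs i) ys (l i) (x i) y (lam i)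
      = 2⁻¹ * ∑ i, ((γ i)⁻¹ * ‖l i - lam i‖ ^ 2
          + (c i)⁻¹ * qnorm (1 - (γ i * c i) • ((A i)ᵀ * A i)) (xs i - x i))
        + 2⁻¹ * qnorm (∑ i, γ i • ((B i)ᵀ * B i)) (ys - y) := by
  rw [sum_congr rfl fun i _ => admmEnergy_eq (A i) (B i) (hc i) _ _ _ _ _ _, qnorm_sum,
    mul_sum, mul_sum, ← sum_add_distrib]
  refine sum_congr rfl fun i _ => ?_
  ring

end PGADMM

/-- Extended-real-valued convex functions `ξ i` and `g` are modelled as real-valued convex functions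
on their effective domains `domξ i` and `domg`. -/
theorem pg_admm_ergodic_bound_general
    {N : ℕ} {n m : Fin N → ℕ} {ny : ℕ}
    (A : ∀ i, Matrix (Fin (m i)) (Fin (n i)) ℝ)
    (B : ∀ i, Matrix (Fin (m i)) (Fin ny) ℝ)
    (b : ∀ i, EuclideanSpace ℝ (Fin (m i)))
    (ξ : ∀ i, EuclideanSpace ℝ (Fin (n i)) → ℝ)
    (domξ : ∀ i, Set (EuclideanSpace ℝ (Fin (n i))))
    (f : ∀ i, EuclideanSpace ℝ (Fin (n i)) → ℝ)
    (f' : ∀ i, EuclideanSpace ℝ (Fin (n i)) → EuclideanSpace ℝ (Fin (n i)))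
    (L : Fin N → ℝ)
    (g : EuclideanSpace ℝ (Fin ny) → ℝ)
    (domg : Set (EuclideanSpace ℝ (Fin ny)))
    (γ : Fin N → ℝ) (c : Fin N → ℝ)
    (x : ℕ → ∀ i, EuclideanSpace ℝ (Fin (n i)))
    (y : ℕ → EuclideanSpace ℝ (Fin ny))
    (lam : ℕ → ∀ i, EuclideanSpace ℝ (Fin (m i)))
    (xbar : ℕ → ∀ i, EuclideanSpace ℝ (Fin (n i)))
    (ybar : ℕ → EuclideanSpace ℝ (Fin ny))
    -- ξ_i proper closed convex
    (hξconv : ∀ i, ConvexOn ℝ (domξ i) (ξ i))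
    -- f_i convex with L_i-Lipschitz gradient
    (hfconv : ∀ i, ConvexOn ℝ Set.univ (f i))
    (hfgrad : ∀ i z, HasGradientAt (f i) (f' i z) z)
    (hfLip : ∀ i z w, ‖f' i z - f' i w‖ ≤ L i * ‖z - w‖)
    -- g proper closed convex
    (hgconv : ConvexOn ℝ domg g)
    -- parameters
    (hγ : ∀ i, 0 < γ i)
    (hcpos : ∀ i, 0 < c i)
    (hcle : ∀ i, c i ≤ (L i + γ i * spec (A i) ^ 2)⁻¹)
    -- PG-ADMM x-update (proximal gradient step, δ_i^k = 0)
    (hxup : ∀ k i, x (k+1) i ∈ domξ i ∧ ∀ z ∈ domξ i,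
      ξ i (x (k+1) i) + (2 * c i)⁻¹ *
        ‖x (k+1) i - (x k i - c i • (f' i (x k i) +
          mvec (A i)ᵀ (lam k i + γ i • (mvec (A i) (x k i) + mvec (B i) (y k) - b i))))‖ ^ 2
      ≤ ξ i z + (2 * c i)⁻¹ *
        ‖z - (x k i - c i • (f' i (x k i) +
          mvec (A i)ᵀ (lam k i + γ i • (mvec (A i) (x k i) + mvec (B i) (y k) - b i))))‖ ^ 2)
    -- PG-ADMM y-update
    (hyup : ∀ k, y (k+1) ∈ domg ∧ ∀ z ∈ domg,
      g (y (k+1)) + ∑ i, γ i / 2 *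
        ‖mvec (A i) (x (k+1) i) + mvec (B i) (y (k+1)) - b i + (γ i)⁻¹ • lam k i‖ ^ 2
      ≤ g z + ∑ i, γ i / 2 *
        ‖mvec (A i) (x (k+1) i) + mvec (B i) z - b i + (γ i)⁻¹ • lam k i‖ ^ 2)
    -- PG-ADMM dual update
    (hlamup : ∀ k i, lam (k+1) i
      = lam k i + γ i • (mvec (A i) (x (k+1) i) + mvec (B i) (y (k+1)) - b i))
    -- ergodic averages
    (hxbar : ∀ t i, xbar t i = (t : ℝ)⁻¹ • ∑ k ∈ Finset.Icc 1 t, x k i)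
    (hybar : ∀ t, ybar t = (t : ℝ)⁻¹ • ∑ k ∈ Finset.Icc 1 t, y k)
    -- (x*, y*, λ*) ∈ χ*, a saddle point of the Lagrangian
    (xs : ∀ i, EuclideanSpace ℝ (Fin (n i)))
    (ys : EuclideanSpace ℝ (Fin ny))
    (ls : ∀ i, EuclideanSpace ℝ (Fin (m i)))
    (hsad₁ : ∀ i, xs i ∈ domξ i) (hsad₂ : ys ∈ domg)
    (hsad₄ : ∀ l : ∀ i, EuclideanSpace ℝ (Fin (m i)),
      g ys + ∑ i, (ξ i (xs i) + f i (xs i))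
        + ∑ i, ⟪l i, mvec (A i) (xs i) + mvec (B i) ys - b i⟫
      ≤ g ys + ∑ i, (ξ i (xs i) + f i (xs i))
        + ∑ i, ⟪ls i, mvec (A i) (xs i) + mvec (B i) ys - b i⟫) :
    ∀ t : ℕ, 1 ≤ t → ∀ l : ∀ i, EuclideanSpace ℝ (Fin (m i)),
      (g (ybar t) + ∑ i, (ξ i (xbar t i) + f i (xbar t i)))
        - (g ys + ∑ i, (ξ i (xs i) + f i (xs i)))
        + ∑ i, ⟪l i, mvec (A i) (xbar t i) + mvec (B i) (ybar t) - b i⟫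
      ≤ (2 * (t:ℝ))⁻¹ * ∑ i, ((γ i)⁻¹ * ‖l i - lam 0 i‖ ^ 2
          + (c i)⁻¹ * qnorm (1 - (γ i * c i) • ((A i)ᵀ * A i)) (xs i - x 0 i))
        + (2 * (t:ℝ))⁻¹ * qnorm (∑ i, γ i • ((B i)ᵀ * B i)) (ys - y 0) := by
  intro t ht l
  have hstep : ∀ i, c i * (L i + γ i * spec (A i) ^ 2) ≤ 1 := fun i => by
    have hpos : 0 < L i + γ i * spec (A i) ^ 2 := inv_pos.1 ((hcpos i).trans_le (hcle i))
    simpa [hpos.ne'] using mul_le_mul_of_nonneg_right (hcle i) hpos.le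
  have hfeas := eq_zero_of_forall_sum_inner_le
    (r := fun i => mvec (A i) (xs i) + mvec (B i) ys - b i) fun l' => by linarith [hsad₄ l']
  set Fs := g ys + ∑ i, (ξ i (xs i) + f i (xs i))
  have hdesc := fun k => lagrangian_sub_le_admmEnergy_sub A B b ξ f g hξconv hfconv hfgrad hfLip
    hgconv hγ hcpos hstep hsad₁ hsad₂ hfeas (hxup k) (hyup k) (hlamup k) l
  have hergodic := ((convexOn_lagrangian A B b ξ f g hξconv hfconv hgconv l).add_const
    (-Fs)).map_average_le_of_le_sub (u := fun k => (x k, y k))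
    (fun k => ⟨fun i _ => (hxup k i).1, (hyup k).1⟩)
    (fun k => by simpa only [Pi.add_apply, ← sub_eq_add_neg] using hdesc k) ht
    (sum_nonneg fun i _ => admmEnergy_nonneg _ _ (hγ i) (hcpos i)
      (mul_sq_norm_mvec_le _ (hγ i).le (hcpos i).le (hstep i)
        (nonneg_mul_norm_of_lipschitz (hfLip i) _)) _ _ _ _)
  have havg : (t : ℝ)⁻¹ • ∑ k ∈ Icc 1 t, (x k, y k) = (xbar t, ybar t) := by
    ext i : 2 <;> simp [hxbar, hybar, Prod.fst_sum, Prod.snd_sum, Finset.sum_apply]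
  rw [havg, Pi.add_apply, sum_admmEnergy_eq A B (fun i => (hcpos i).ne')] at hergodic
  calc _ = lagrangian A B b ξ f g l (xbar t, ybar t) + -Fs := by rw [lagrangian]; ring
    _ ≤ _ := hergodic
    _ = _ := by ring

/-- Theorem `lem:ergodic`, deterministic case, bound (15):
the ergodic suboptimality/infeasibility bound for PG-ADMM with constant step sizes
`c_i ∈ (0, 1/(L_i + γ_i‖A_i‖²)]`.  Extended-real-valued proper closed convex functions
`ξ_i` and `g` are modelled as real-valued convex functions on their (closed, nonempty,
convex) effective domains `domξ i` and `domg`. -/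
theorem pg_admm_ergodic_bound
    {N : ℕ} {n m : Fin N → ℕ} {ny : ℕ}
    (A : ∀ i, Matrix (Fin (m i)) (Fin (n i)) ℝ)
    (B : ∀ i, Matrix (Fin (m i)) (Fin ny) ℝ)
    (b : ∀ i, EuclideanSpace ℝ (Fin (m i)))
    (ξ : ∀ i, EuclideanSpace ℝ (Fin (n i)) → ℝ)
    (domξ : ∀ i, Set (EuclideanSpace ℝ (Fin (n i))))
    (f : ∀ i, EuclideanSpace ℝ (Fin (n i)) → ℝ)
    (f' : ∀ i, EuclideanSpace ℝ (Fin (n i)) → EuclideanSpace ℝ (Fin (n i)))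
    (L : Fin N → ℝ)
    (g : EuclideanSpace ℝ (Fin ny) → ℝ)
    (domg : Set (EuclideanSpace ℝ (Fin ny)))
    (γ : Fin N → ℝ) (c : Fin N → ℝ)
    (x : ℕ → ∀ i, EuclideanSpace ℝ (Fin (n i)))
    (y : ℕ → EuclideanSpace ℝ (Fin ny))
    (lam : ℕ → ∀ i, EuclideanSpace ℝ (Fin (m i)))
    (xbar : ℕ → ∀ i, EuclideanSpace ℝ (Fin (n i)))
    (ybar : ℕ → EuclideanSpace ℝ (Fin ny))
    -- ξ_i proper closed convex
    (hξconv : ∀ i, ConvexOn ℝ (domξ i) (ξ i))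
    (hξlsc : ∀ i, LowerSemicontinuousOn (ξ i) (domξ i))
    (hξcl : ∀ i, IsClosed (domξ i))
    (hξne : ∀ i, (domξ i).Nonempty)
    -- f_i convex with L_i-Lipschitz gradient
    (hfconv : ∀ i, ConvexOn ℝ Set.univ (f i))
    (hfgrad : ∀ i z, HasGradientAt (f i) (f' i z) z)
    (hfLip : ∀ i z w, ‖f' i z - f' i w‖ ≤ L i * ‖z - w‖)
    -- g proper closed convex
    (hgconv : ConvexOn ℝ domg g)
    (hglsc : LowerSemicontinuousOn g domg)
    (hgcl : IsClosed domg)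
    (hgne : domg.Nonempty)
    -- parameters
    (hγ : ∀ i, 0 < γ i)
    (hcpos : ∀ i, 0 < c i)
    (hcle : ∀ i, c i ≤ (L i + γ i * spec (A i) ^ 2)⁻¹)
    -- initial condition: −Σ Bᵢᵀ λᵢ⁰ ∈ ∂g(y⁰)
    (hinit : y 0 ∈ domg ∧ ∀ z ∈ domg,
      g (y 0) + ⟪-(∑ i, mvec (B i)ᵀ (lam 0 i)), z - y 0⟫ ≤ g z)
    -- PG-ADMM x-update (proximal gradient step, δ_i^k = 0)
    (hxup : ∀ k i, x (k+1) i ∈ domξ i ∧ ∀ z ∈ domξ i,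
      ξ i (x (k+1) i) + (2 * c i)⁻¹ *
        ‖x (k+1) i - (x k i - c i • (f' i (x k i) +
          mvec (A i)ᵀ (lam k i + γ i • (mvec (A i) (x k i) + mvec (B i) (y k) - b i))))‖ ^ 2
      ≤ ξ i z + (2 * c i)⁻¹ *
        ‖z - (x k i - c i • (f' i (x k i) +
          mvec (A i)ᵀ (lam k i + γ i • (mvec (A i) (x k i) + mvec (B i) (y k) - b i))))‖ ^ 2)
    -- PG-ADMM y-update
    (hyup : ∀ k, y (k+1) ∈ domg ∧ ∀ z ∈ domg,
      g (y (k+1)) + ∑ i, γ i / 2 *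
        ‖mvec (A i) (x (k+1) i) + mvec (B i) (y (k+1)) - b i + (γ i)⁻¹ • lam k i‖ ^ 2
      ≤ g z + ∑ i, γ i / 2 *
        ‖mvec (A i) (x (k+1) i) + mvec (B i) z - b i + (γ i)⁻¹ • lam k i‖ ^ 2)
    -- PG-ADMM dual update
    (hlamup : ∀ k i, lam (k+1) i
      = lam k i + γ i • (mvec (A i) (x (k+1) i) + mvec (B i) (y (k+1)) - b i))
    -- ergodic averages
    (hxbar : ∀ t i, xbar t i = (t : ℝ)⁻¹ • ∑ k ∈ Finset.Icc 1 t, x k i)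
    (hybar : ∀ t, ybar t = (t : ℝ)⁻¹ • ∑ k ∈ Finset.Icc 1 t, y k)
    -- (x*, y*, λ*) ∈ χ*, a saddle point of the Lagrangian
    (xs : ∀ i, EuclideanSpace ℝ (Fin (n i)))
    (ys : EuclideanSpace ℝ (Fin ny))
    (ls : ∀ i, EuclideanSpace ℝ (Fin (m i)))
    (hsad₁ : ∀ i, xs i ∈ domξ i) (hsad₂ : ys ∈ domg)
    (hsad₃ : ∀ (x' : ∀ i, EuclideanSpace ℝ (Fin (n i))) (y' : EuclideanSpace ℝ (Fin ny)),
      (∀ i, x' i ∈ domξ i) → y' ∈ domg →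
      g ys + ∑ i, (ξ i (xs i) + f i (xs i))
        + ∑ i, ⟪ls i, mvec (A i) (xs i) + mvec (B i) ys - b i⟫
      ≤ g y' + ∑ i, (ξ i (x' i) + f i (x' i))
        + ∑ i, ⟪ls i, mvec (A i) (x' i) + mvec (B i) y' - b i⟫)
    (hsad₄ : ∀ l : ∀ i, EuclideanSpace ℝ (Fin (m i)),
      g ys + ∑ i, (ξ i (xs i) + f i (xs i))
        + ∑ i, ⟪l i, mvec (A i) (xs i) + mvec (B i) ys - b i⟫
      ≤ g ys + ∑ i, (ξ i (xs i) + f i (xs i))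
        + ∑ i, ⟪ls i, mvec (A i) (xs i) + mvec (B i) ys - b i⟫) :
    ∀ t : ℕ, 1 ≤ t → ∀ l : ∀ i, EuclideanSpace ℝ (Fin (m i)),
      (g (ybar t) + ∑ i, (ξ i (xbar t i) + f i (xbar t i)))
        - (g ys + ∑ i, (ξ i (xs i) + f i (xs i)))
        + ∑ i, ⟪l i, mvec (A i) (xbar t i) + mvec (B i) (ybar t) - b i⟫
      ≤ (2 * (t:ℝ))⁻¹ * ∑ i, ((γ i)⁻¹ * ‖l i - lam 0 i‖ ^ 2
          + (c i)⁻¹ * qnorm (1 - (γ i * c i) • ((A i)ᵀ * A i)) (xs i - x 0 i))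
        + (2 * (t:ℝ))⁻¹ * qnorm (∑ i, γ i • ((B i)ᵀ * B i)) (ys - y 0) :=
  pg_admm_ergodic_bound_general A B b ξ domξ f f' L g domg γ c x y lam xbar ybar hξconv hfconv
    hfgrad hfLip hgconv hγ hcpos hcle hxup hyup hlamup hxbar hybar xs ys ls hsad₁ hsad₂ hsad₄
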